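/- Let F be a field, v₁,v₂,v₃,v₄ ∈ F³ vectors any three of which are linearly independent, and λ ∈ Fˣ. Then in the third exterior power ⋀³_ℚ (Fˣ_ℚ) one has ∑_{σ ∈ S₄} sgn(σ) · (λ·Δ(v_{σ(1)},v_{σ(2)},v_{σ(3)})) ∧ (λ·Δ(v_{σ(1)},v_{σ(2)},v_{σ(4)})) ∧ (λ·Δ(v_{σ(1)},v_{σ(3)},v_{σ(4)})) = ∑_{σ ∈ S₄} sgn(σ) · Δ(v_{σ(1)},v_{σ(2)},v_{σ(3)}) ∧ Δ(v_{σ(1)},v_{σ(2)},v_{σ(4)}) ∧ Δ(v_{σ(1)},v_{σ(3)},v_{σ(4)}); that is, the element f₄(3)(v₁,v₂,v₃,v₄) is independent of the choice of volume form used to define the determinants. -/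
import Mathlib


open TensorProduct Matrix

noncomputable section

/-- `Fˣ_ℚ`: the ℚ-vector space `Fˣ ⊗_ℤ ℚ`, the multiplicative group `Fˣ`
being regarded as a ℤ-module written additively. -/
abbrev UnitsQ (F : Type*) [Field F] : Type _ := ℚ ⊗[ℤ] Additive Fˣ

/-- The image of a nonzero element `a ∈ Fˣ` in `Fˣ_ℚ` (zero goes to `0`). -/
def toUnitsQ {F : Type*} [Field F] (a : F) : UnitsQ F :=
  letI := Classical.decEq F
  if h : a = 0 then 0 else (1 : ℚ) ⊗ₜ[ℤ] Additive.ofMul (Units.mk0 a h)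

/-- The generator `a ∈ Fˣ_ℚ` viewed in the exterior algebra `⋀_ℚ (Fˣ_ℚ)`;
products of such elements are the wedge products. -/
def wedgeGen {F : Type*} [Field F] (a : F) : ExteriorAlgebra ℚ (UnitsQ F) :=
  ExteriorAlgebra.ι ℚ (toUnitsQ a)

/-- `det3 x y z` is the determinant of the 3×3 matrix whose columns are `x`, `y`, `z`. -/
def det3 {F : Type*} [Field F] (x y z : Fin 3 → F) : F :=
  Matrix.det ((Matrix.of ![x, y, z])ᵀ)

section aux

variable {F : Type*} [Field F]

lemma f4aux_toUnitsQ_mul {a b : F} (ha : a ≠ 0) (hb : b ≠ 0) :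
    toUnitsQ (a * b) = toUnitsQ a + toUnitsQ b := by
  classical
  rw [toUnitsQ, toUnitsQ, toUnitsQ, dif_neg (mul_ne_zero ha hb), dif_neg ha, dif_neg hb]
  rw [show Units.mk0 (a*b) (mul_ne_zero ha hb) = Units.mk0 a ha * Units.mk0 b hb from
    Units.ext rfl]
  rw [show Additive.ofMul (Units.mk0 a ha * Units.mk0 b hb)
      = Additive.ofMul (Units.mk0 a ha) + Additive.ofMul (Units.mk0 b hb) from rfl]
  rw [tmul_add]

lemma f4aux_toUnitsQ_torsion (t : Additive Fˣ) (ht : t + t = 0) :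
    ((1:ℚ) ⊗ₜ[ℤ] t : UnitsQ F) = 0 := by
  have h2 : ((2:ℤ) • t) = 0 := by rw [two_smul ℤ t]; exact ht
  have e1 : ((1:ℚ) ⊗ₜ[ℤ] t : UnitsQ F) = (2⁻¹:ℚ) • (((2:ℤ) • (1:ℚ)) ⊗ₜ[ℤ] t) := by
    rw [smul_tmul']
    congr 1
    norm_num
  rw [e1, smul_tmul, h2, tmul_zero, smul_zero]

lemma f4aux_toUnitsQ_neg (a : F) : toUnitsQ (-a) = toUnitsQ a := by
  classical
  rcases eq_or_ne a 0 with rfl | ha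
  · simp
  have : (-a) = (-1) * a := by ring
  rw [this, f4aux_toUnitsQ_mul (by norm_num) ha]
  have h1 : toUnitsQ (-1 : F) = 0 := by
    rw [toUnitsQ, dif_neg (by norm_num : (-1:F) ≠ 0)]
    apply f4aux_toUnitsQ_torsion
    rw [← ofMul_mul]
    convert ofMul_one
    ext
    simp
  rw [h1, zero_add]

lemma f4aux_det3_eq (x y z : Fin 3 → F) : det3 x y z =
    x 0 * (y 1 * z 2) - x 0 * (z 1 * y 2) - y 0 * (x 1 * z 2) + y 0 * (z 1 * x 2)
      + z 0 * (x 1 * y 2) - z 0 * (y 1 * x 2) := by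
  rw [det3, Matrix.det_transpose, Matrix.det_fin_three]
  simp [Matrix.of_apply]
  ring

lemma f4aux_det3_swap01 (x y z : Fin 3 → F) : det3 y x z = -det3 x y z := by
  rw [f4aux_det3_eq, f4aux_det3_eq]; ring

lemma f4aux_det3_rev (x y z : Fin 3 → F) : det3 z y x = -det3 x y z := by
  rw [f4aux_det3_eq, f4aux_det3_eq]; ring

lemma f4aux_toUnitsQ_det3_swap01 (x y z : Fin 3 → F) :
    toUnitsQ (det3 y x z) = toUnitsQ (det3 x y z) := by
  rw [f4aux_det3_swap01, f4aux_toUnitsQ_neg]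

lemma f4aux_toUnitsQ_det3_rev (x y z : Fin 3 → F) :
    toUnitsQ (det3 z y x) = toUnitsQ (det3 x y z) := by
  rw [f4aux_det3_rev, f4aux_toUnitsQ_neg]

lemma f4aux_det3_ne_zero {x y z : Fin 3 → F} (h : LinearIndependent F ![x, y, z]) :
    det3 x y z ≠ 0 := by
  have : LinearIndependent F (fun i => (Matrix.of ![x, y, z]) i) := h
  have hu : IsUnit (Matrix.of ![x, y, z]) := Matrix.linearIndependent_rows_iff_isUnit.mp this
  rw [Matrix.isUnit_iff_isUnit_det, isUnit_iff_ne_zero] at hu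
  rw [det3, Matrix.det_transpose]
  exact hu

end aux

section ext

variable {M : Type*} [AddCommGroup M] [Module ℚ M]

lemma f4aux_swap_base (x y : M) :
    ExteriorAlgebra.ι ℚ x * ExteriorAlgebra.ι ℚ y
      = -(ExteriorAlgebra.ι ℚ y * ExteriorAlgebra.ι ℚ x) :=
  eq_neg_of_add_eq_zero_left (ExteriorAlgebra.ι_add_mul_swap x y)

lemma f4aux_swap_lift (x y : M) (z : ExteriorAlgebra ℚ M) :
    ExteriorAlgebra.ι ℚ x * (ExteriorAlgebra.ι ℚ y * z)
      = -(ExteriorAlgebra.ι ℚ y * (ExteriorAlgebra.ι ℚ x * z)) := by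
  rw [← mul_assoc, ← mul_assoc, f4aux_swap_base, neg_mul]

lemma f4aux_sq_lift (x : M) (z : ExteriorAlgebra ℚ M) :
    ExteriorAlgebra.ι ℚ x * (ExteriorAlgebra.ι ℚ x * z) = 0 := by
  rw [← mul_assoc, ExteriorAlgebra.ι_sq_zero, zero_mul]

lemma f4aux_expand3 (L A B C : M) :
    (ExteriorAlgebra.ι ℚ L + ExteriorAlgebra.ι ℚ A) *
      ((ExteriorAlgebra.ι ℚ L + ExteriorAlgebra.ι ℚ B) *
        (ExteriorAlgebra.ι ℚ L + ExteriorAlgebra.ι ℚ C)) =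
      ExteriorAlgebra.ι ℚ A * (ExteriorAlgebra.ι ℚ B * ExteriorAlgebra.ι ℚ C)
        + (ExteriorAlgebra.ι ℚ L * (ExteriorAlgebra.ι ℚ B * ExteriorAlgebra.ι ℚ C)
          - ExteriorAlgebra.ι ℚ L * (ExteriorAlgebra.ι ℚ A * ExteriorAlgebra.ι ℚ C)
          + ExteriorAlgebra.ι ℚ L * (ExteriorAlgebra.ι ℚ A * ExteriorAlgebra.ι ℚ B)) := by
  simp only [mul_add, add_mul, ExteriorAlgebra.ι_sq_zero, f4aux_sq_lift, mul_zero, zero_mul,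
    mul_neg, neg_neg, zero_add, add_zero,
    f4aux_swap_base B L, f4aux_swap_base C L, f4aux_swap_base A L,
    f4aux_swap_lift B L, f4aux_swap_lift C L, f4aux_swap_lift A L]
  abel

lemma f4aux_sum_sign_smul_eq_zero {A : Type*} [AddCommGroup A] [Module ℚ A]
    (τ : Equiv.Perm (Fin 4)) (hτ : Equiv.Perm.sign τ = -1)
    (f : Equiv.Perm (Fin 4) → A) (hf : ∀ σ, f (σ * τ) = f σ) :
    ∑ σ : Equiv.Perm (Fin 4), ((Equiv.Perm.sign σ : ℤ)) • f σ = 0 := by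
  have key : ∑ σ : Equiv.Perm (Fin 4), ((Equiv.Perm.sign σ : ℤ)) • f σ
      = ∑ σ : Equiv.Perm (Fin 4), ((Equiv.Perm.sign (σ * τ) : ℤ)) • f (σ * τ) :=
    (Fintype.sum_equiv (Equiv.mulRight τ) _ _ (fun σ => rfl)).symm
  have step : ∀ σ : Equiv.Perm (Fin 4),
      ((Equiv.Perm.sign (σ * τ) : ℤ)) • f (σ * τ) = -(((Equiv.Perm.sign σ : ℤ)) • f σ) := by
    intro σ
    rw [hf, Equiv.Perm.sign_mul, hτ]
    push_cast
    rw [mul_neg_one, neg_smul]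
  rw [Finset.sum_congr rfl (fun σ _ => step σ), Finset.sum_neg_distrib] at key
  have h2 : (2:ℚ) • ∑ σ : Equiv.Perm (Fin 4), ((Equiv.Perm.sign σ : ℤ)) • f σ = 0 := by
    rw [two_smul]
    nth_rewrite 2 [key]
    simp
  have := smul_eq_zero.mp h2
  simpa using this

end ext

set_option maxHeartbeats 2000000

/-- **Theorem (z2) a) for `f₄(3)`**: the element
`f₄(3)(v₁,…,v₄) = Alt₄ Δ(v₁,v₂,v₃) ∧ Δ(v₁,v₂,v₄) ∧ Δ(v₁,v₃,v₄) ∈ ⋀³ Fˣ_ℚ`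
is unchanged when every determinant is multiplied by a fixed `λ ∈ Fˣ`,
i.e. it does not depend on the choice of volume form. -/
theorem f4_independent_of_volume_form {F : Type*} [Field F] (v : Fin 4 → (Fin 3 → F))
    (hv : ∀ i j k : Fin 4, i ≠ j → i ≠ k → j ≠ k → LinearIndependent F ![v i, v j, v k])
    (l : F) (hl : l ≠ 0) :
    ∑ σ : Equiv.Perm (Fin 4), (Equiv.Perm.sign σ : ℤ) •
      (wedgeGen (l * det3 (v (σ 0)) (v (σ 1)) (v (σ 2))) *
        wedgeGen (l * det3 (v (σ 0)) (v (σ 1)) (v (σ 3))) *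
        wedgeGen (l * det3 (v (σ 0)) (v (σ 2)) (v (σ 3)))) =
    ∑ σ : Equiv.Perm (Fin 4), (Equiv.Perm.sign σ : ℤ) •
      (wedgeGen (det3 (v (σ 0)) (v (σ 1)) (v (σ 2))) *
        wedgeGen (det3 (v (σ 0)) (v (σ 1)) (v (σ 3))) *
        wedgeGen (det3 (v (σ 0)) (v (σ 2)) (v (σ 3)))) := by
  classical
  have hd : ∀ (i j k : Fin 4), i ≠ j → i ≠ k → j ≠ k → det3 (v i) (v j) (v k) ≠ 0 :=
    fun i j k h1 h2 h3 => f4aux_det3_ne_zero (hv i j k h1 h2 h3)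
  have hdA : ∀ σ : Equiv.Perm (Fin 4), det3 (v (σ 0)) (v (σ 1)) (v (σ 2)) ≠ 0 := fun σ =>
    hd _ _ _ (σ.injective.ne (by decide)) (σ.injective.ne (by decide))
      (σ.injective.ne (by decide))
  have hdB : ∀ σ : Equiv.Perm (Fin 4), det3 (v (σ 0)) (v (σ 1)) (v (σ 3)) ≠ 0 := fun σ =>
    hd _ _ _ (σ.injective.ne (by decide)) (σ.injective.ne (by decide))
      (σ.injective.ne (by decide))
  have hdC : ∀ σ : Equiv.Perm (Fin 4), det3 (v (σ 0)) (v (σ 2)) (v (σ 3)) ≠ 0 := fun σ =>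
    hd _ _ _ (σ.injective.ne (by decide)) (σ.injective.ne (by decide))
      (σ.injective.ne (by decide))
  have hpt : ∀ σ : Equiv.Perm (Fin 4),
      wedgeGen (l * det3 (v (σ 0)) (v (σ 1)) (v (σ 2))) *
        wedgeGen (l * det3 (v (σ 0)) (v (σ 1)) (v (σ 3))) *
        wedgeGen (l * det3 (v (σ 0)) (v (σ 2)) (v (σ 3)))
      = wedgeGen (det3 (v (σ 0)) (v (σ 1)) (v (σ 2))) *
          wedgeGen (det3 (v (σ 0)) (v (σ 1)) (v (σ 3))) *
          wedgeGen (det3 (v (σ 0)) (v (σ 2)) (v (σ 3)))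
        + (ExteriorAlgebra.ι ℚ (toUnitsQ l) *
              (ExteriorAlgebra.ι ℚ (toUnitsQ (det3 (v (σ 0)) (v (σ 1)) (v (σ 3)))) *
                ExteriorAlgebra.ι ℚ (toUnitsQ (det3 (v (σ 0)) (v (σ 2)) (v (σ 3)))))
          - ExteriorAlgebra.ι ℚ (toUnitsQ l) *
              (ExteriorAlgebra.ι ℚ (toUnitsQ (det3 (v (σ 0)) (v (σ 1)) (v (σ 2)))) *
                ExteriorAlgebra.ι ℚ (toUnitsQ (det3 (v (σ 0)) (v (σ 2)) (v (σ 3)))))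
          + ExteriorAlgebra.ι ℚ (toUnitsQ l) *
              (ExteriorAlgebra.ι ℚ (toUnitsQ (det3 (v (σ 0)) (v (σ 1)) (v (σ 2)))) *
                ExteriorAlgebra.ι ℚ (toUnitsQ (det3 (v (σ 0)) (v (σ 1)) (v (σ 3)))))) := by
    intro σ
    have e : ∀ d : F, d ≠ 0 →
        wedgeGen (l * d)
          = ExteriorAlgebra.ι ℚ (toUnitsQ l) + ExteriorAlgebra.ι ℚ (toUnitsQ d) := by
      intro d hdne
      rw [wedgeGen, f4aux_toUnitsQ_mul hl hdne, map_add]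
    simp only [mul_assoc]
    rw [e _ (hdA σ), e _ (hdB σ), e _ (hdC σ), f4aux_expand3]
    rfl
  have split : (∑ σ : Equiv.Perm (Fin 4), (Equiv.Perm.sign σ : ℤ) •
      (wedgeGen (l * det3 (v (σ 0)) (v (σ 1)) (v (σ 2))) *
        wedgeGen (l * det3 (v (σ 0)) (v (σ 1)) (v (σ 3))) *
        wedgeGen (l * det3 (v (σ 0)) (v (σ 2)) (v (σ 3)))))
      = (∑ σ : Equiv.Perm (Fin 4), (Equiv.Perm.sign σ : ℤ) •
          (wedgeGen (det3 (v (σ 0)) (v (σ 1)) (v (σ 2))) *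
            wedgeGen (det3 (v (σ 0)) (v (σ 1)) (v (σ 3))) *
            wedgeGen (det3 (v (σ 0)) (v (σ 2)) (v (σ 3)))))
        + ((∑ σ : Equiv.Perm (Fin 4), (Equiv.Perm.sign σ : ℤ) •
              (ExteriorAlgebra.ι ℚ (toUnitsQ l) *
                (ExteriorAlgebra.ι ℚ (toUnitsQ (det3 (v (σ 0)) (v (σ 1)) (v (σ 3)))) *
                  ExteriorAlgebra.ι ℚ (toUnitsQ (det3 (v (σ 0)) (v (σ 2)) (v (σ 3)))))))
          - (∑ σ : Equiv.Perm (Fin 4), (Equiv.Perm.sign σ : ℤ) •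
              (ExteriorAlgebra.ι ℚ (toUnitsQ l) *
                (ExteriorAlgebra.ι ℚ (toUnitsQ (det3 (v (σ 0)) (v (σ 1)) (v (σ 2)))) *
                  ExteriorAlgebra.ι ℚ (toUnitsQ (det3 (v (σ 0)) (v (σ 2)) (v (σ 3)))))))
          + (∑ σ : Equiv.Perm (Fin 4), (Equiv.Perm.sign σ : ℤ) •
              (ExteriorAlgebra.ι ℚ (toUnitsQ l) *
                (ExteriorAlgebra.ι ℚ (toUnitsQ (det3 (v (σ 0)) (v (σ 1)) (v (σ 2)))) *
                  ExteriorAlgebra.ι ℚ (toUnitsQ (det3 (v (σ 0)) (v (σ 1)) (v (σ 3)))))))) := by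
    rw [← Finset.sum_sub_distrib, ← Finset.sum_add_distrib, ← Finset.sum_add_distrib]
    refine Finset.sum_congr rfl (fun σ _ => ?_)
    rw [hpt σ, smul_add, smul_add, smul_sub]
  rw [split]
  have z1 : (∑ σ : Equiv.Perm (Fin 4), (Equiv.Perm.sign σ : ℤ) •
      (ExteriorAlgebra.ι ℚ (toUnitsQ l) *
        (ExteriorAlgebra.ι ℚ (toUnitsQ (det3 (v (σ 0)) (v (σ 1)) (v (σ 3)))) *
          ExteriorAlgebra.ι ℚ (toUnitsQ (det3 (v (σ 0)) (v (σ 2)) (v (σ 3))))))) = 0 := by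
    refine f4aux_sum_sign_smul_eq_zero (Equiv.swap 0 3)
      (Equiv.Perm.sign_swap (by decide)) _ (fun σ => ?_)
    simp only [Equiv.Perm.mul_apply,
      show (Equiv.swap (0:Fin 4) 3) 0 = 3 from by decide,
      show (Equiv.swap (0:Fin 4) 3) 1 = 1 from by decide,
      show (Equiv.swap (0:Fin 4) 3) 2 = 2 from by decide,
      show (Equiv.swap (0:Fin 4) 3) 3 = 0 from by decide]
    rw [f4aux_toUnitsQ_det3_rev (v (σ 0)) (v (σ 1)) (v (σ 3)),
      f4aux_toUnitsQ_det3_rev (v (σ 0)) (v (σ 2)) (v (σ 3))]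
  have z2 : (∑ σ : Equiv.Perm (Fin 4), (Equiv.Perm.sign σ : ℤ) •
      (ExteriorAlgebra.ι ℚ (toUnitsQ l) *
        (ExteriorAlgebra.ι ℚ (toUnitsQ (det3 (v (σ 0)) (v (σ 1)) (v (σ 2)))) *
          ExteriorAlgebra.ι ℚ (toUnitsQ (det3 (v (σ 0)) (v (σ 2)) (v (σ 3))))))) = 0 := by
    refine f4aux_sum_sign_smul_eq_zero (Equiv.swap 0 2)
      (Equiv.Perm.sign_swap (by decide)) _ (fun σ => ?_)
    simp only [Equiv.Perm.mul_apply,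
      show (Equiv.swap (0:Fin 4) 2) 0 = 2 from by decide,
      show (Equiv.swap (0:Fin 4) 2) 1 = 1 from by decide,
      show (Equiv.swap (0:Fin 4) 2) 2 = 0 from by decide,
      show (Equiv.swap (0:Fin 4) 2) 3 = 3 from by decide]
    rw [f4aux_toUnitsQ_det3_rev (v (σ 0)) (v (σ 1)) (v (σ 2)),
      f4aux_toUnitsQ_det3_swap01 (v (σ 0)) (v (σ 2)) (v (σ 3))]
  have z3 : (∑ σ : Equiv.Perm (Fin 4), (Equiv.Perm.sign σ : ℤ) •
      (ExteriorAlgebra.ι ℚ (toUnitsQ l) *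
        (ExteriorAlgebra.ι ℚ (toUnitsQ (det3 (v (σ 0)) (v (σ 1)) (v (σ 2)))) *
          ExteriorAlgebra.ι ℚ (toUnitsQ (det3 (v (σ 0)) (v (σ 1)) (v (σ 3))))))) = 0 := by
    refine f4aux_sum_sign_smul_eq_zero (Equiv.swap 0 1)
      (Equiv.Perm.sign_swap (by decide)) _ (fun σ => ?_)
    simp only [Equiv.Perm.mul_apply,
      show (Equiv.swap (0:Fin 4) 1) 0 = 1 from by decide,
      show (Equiv.swap (0:Fin 4) 1) 1 = 0 from by decide,
      show (Equiv.swap (0:Fin 4) 1) 2 = 2 from by decide,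
      show (Equiv.swap (0:Fin 4) 1) 3 = 3 from by decide]
    rw [f4aux_toUnitsQ_det3_swap01 (v (σ 0)) (v (σ 1)) (v (σ 2)),
      f4aux_toUnitsQ_det3_swap01 (v (σ 0)) (v (σ 1)) (v (σ 3))]
  rw [z1, z2, z3]
  simp
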